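/- (Concentration of Gaussian norm) Let x ~ N(0, σ²Iₙ) on ℝⁿ. Then for every t ≥ 0, the probability that |‖x‖₂ - σ√n| ≥ t is at most 2·exp(-c·t²/σ²) for some universal constant c > 0. In particular, for fixed σ, the ratio ‖x‖₂/(σ√n) converges in probability to 1 as n → ∞. -/

import Mathlib

open MeasureTheory ProbabilityTheory

noncomputable def stdNormalCDF (t : ℝ) : ℝ :=
  ∫ x in Set.Iic t, Real.exp (-x ^ 2 / 2) / Real.sqrt (2 * Real.pi)

noncomputable def stdNormalCDFInv : ℝ → ℝ := Function.invFun stdNormalCDF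

noncomputable def gaussianPi (n : ℕ) (x₀ : EuclideanSpace ℝ (Fin n)) (σ : ℝ) :
    Measure (EuclideanSpace ℝ (Fin n)) :=
  Measure.map (WithLp.toLp 2) (Measure.pi fun i => gaussianReal (x₀ i) ⟨σ ^ 2, sq_nonneg σ⟩)

/-!
Chernoff's method for `‖x‖² = ∑ i, x i ^ 2`, a sum of `n` independent copies of `σ² χ²₁`
whose moment generating function is `(1 - 2 l σ²)^(-n/2)`. Choosing `l` so that
`(1 - 2 l σ²)^(-1/2) = r`, Markov's inequality for `exp (l ‖x‖²)` bounds `P(‖x‖ ≥ r σ √n)`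
(for `r ≥ 1`, `l ≥ 0`) and `P(‖x‖ ≤ r σ √n)` (for `r ≤ 1`, `l ≤ 0`) by
`r ^ n * exp (-n (r² - 1) / 2)`. With `r = 1 ± t / (σ √n)` and `1 + u ≤ exp u` this is at most
`exp (-t² / (2 σ²))`, so `c = 1 / 2` works; the ratio statement is the case `t = δ σ √n`.
-/

open Real
open scoped NNReal

lemma one_add_pow_mul_exp_le (n : ℕ) {u : ℝ} (hu : -1 ≤ u) :
    (1 + u) ^ n * exp (-(n * ((1 + u) ^ 2 - 1) / 2)) ≤ exp (-(n * u ^ 2 / 2)) :=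
  calc (1 + u) ^ n * exp (-(n * ((1 + u) ^ 2 - 1) / 2))
      ≤ exp u ^ n * exp (-(n * ((1 + u) ^ 2 - 1) / 2)) := by
        gcongr
        · linarith
        · linarith [add_one_le_exp u]
    _ = exp (-(n * u ^ 2 / 2)) := by
        rw [← exp_nat_mul, ← exp_add]
        ring_nf

lemma integral_exp_mul_sq_gaussianReal_zero_one {a : ℝ} (ha : 2 * a < 1) :
    ∫ z, exp (a * z ^ 2) ∂gaussianReal 0 1 = (√(1 - 2 * a))⁻¹ := by
  have hpdf (z : ℝ) : gaussianPDFReal 0 1 z • exp (a * z ^ 2) =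
      (√(2 * π))⁻¹ * exp (-(1 / 2 - a) * z ^ 2) := by
    rw [gaussianPDFReal_def, smul_eq_mul, mul_assoc, ← exp_add]
    congr 2
    · simp
    · push_cast; ring
  have hb : 0 < 1 / 2 - a := by linarith
  simp_rw [integral_gaussianReal_eq_integral_smul one_ne_zero, hpdf, integral_const_mul,
    integral_gaussian]
  rw [← sqrt_inv, ← sqrt_inv, ← sqrt_mul (by positivity)]
  congr 1
  field_simp

lemma gaussianReal_zero_eq_map_sqrt_mul (v : ℝ≥0) :
    gaussianReal 0 v = (gaussianReal 0 1).map (√v * ·) := by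
  rw [gaussianReal_map_const_mul, mul_zero, mul_one]
  congr
  ext
  simp

lemma integral_exp_mul_sq_gaussianReal {v : ℝ≥0} {l : ℝ} (h : 2 * l * v < 1) :
    ∫ y, exp (l * y ^ 2) ∂gaussianReal 0 v = (√(1 - 2 * l * v))⁻¹ := by
  rw [gaussianReal_zero_eq_map_sqrt_mul, integral_map (by fun_prop) (by fun_prop)]
  simp_rw [mul_pow, sq_sqrt v.coe_nonneg, ← mul_assoc]
  rw [integral_exp_mul_sq_gaussianReal_zero_one (by linarith), mul_assoc]

lemma integral_exp_mul_sum_sq_pi_gaussianReal {ι : Type*} [Fintype ι] {v : ℝ≥0} {l : ℝ}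
    (h : 2 * l * v < 1) :
    ∫ x : ι → ℝ, exp (l * ∑ i, x i ^ 2) ∂Measure.pi (fun _ ↦ gaussianReal 0 v) =
      (√(1 - 2 * l * v))⁻¹ ^ Fintype.card ι := by
  simp_rw [Finset.mul_sum, exp_sum]
  rw [integral_fintype_prod_eq_pow (fun y ↦ exp (l * y ^ 2)), integral_exp_mul_sq_gaussianReal h]

/-- The variance `⟨σ ^ 2, _⟩` in `gaussianPi` elaborates at type `{r // 0 ≤ r}` rather than `ℝ≥0`,
which hides the instances on `gaussianReal` from type class search. -/
lemma gaussianPi_eq_map_pi (n : ℕ) (x₀ : EuclideanSpace ℝ (Fin n)) (σ : ℝ) :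
    gaussianPi n x₀ σ =
      (Measure.pi fun i ↦ gaussianReal (x₀ i) (σ ^ 2).toNNReal).map (WithLp.toLp 2) := by
  rw [gaussianPi, Real.toNNReal_of_nonneg (sq_nonneg σ)]
  rfl

instance (n : ℕ) (x₀ : EuclideanSpace ℝ (Fin n)) (σ : ℝ) :
    IsProbabilityMeasure (gaussianPi n x₀ σ) := by
  rw [gaussianPi_eq_map_pi]
  exact Measure.isProbabilityMeasure_map (WithLp.measurable_toLp 2 _).aemeasurable

lemma gaussianPi_singleton {n : ℕ} (hn : n ≠ 0) (x₀ : EuclideanSpace ℝ (Fin n)) {σ : ℝ}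
    (hσ : σ ≠ 0) (x : EuclideanSpace ℝ (Fin n)) : gaussianPi n x₀ σ {x} = 0 := by
  have : NeZero n := ⟨hn⟩
  have := fun i : Fin n ↦ nullSingletonClass_gaussianReal (μ := x₀ i) (v := (σ ^ 2).toNNReal)
    (by simpa using hσ)
  rw [gaussianPi_eq_map_pi, ← MeasurableEquiv.coe_toLp, MeasurableEquiv.map_apply]
  exact measure_mono_null (by rintro y rfl; rfl) (measure_singleton x.ofLp)

lemma mgf_norm_sq_gaussianPi (n : ℕ) {σ l : ℝ} (h : 2 * l * σ ^ 2 < 1) :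
    mgf (fun x ↦ ‖x‖ ^ 2) (gaussianPi n 0 σ) l = (√(1 - 2 * l * σ ^ 2))⁻¹ ^ n := by
  rw [mgf, gaussianPi_eq_map_pi, ← MeasurableEquiv.coe_toLp, integral_map_equiv]
  simp_rw [MeasurableEquiv.coe_toLp, EuclideanSpace.real_norm_sq_eq, WithLp.ofLp_zero,
    Pi.zero_apply]
  rw [integral_exp_mul_sum_sq_pi_gaussianReal (by rwa [Real.coe_toNNReal _ (sq_nonneg σ)]),
    Real.coe_toNNReal _ (sq_nonneg σ), Fintype.card_fin]

lemma integrable_exp_mul_norm_sq_gaussianPi (n : ℕ) {σ l : ℝ} (h : 2 * l * σ ^ 2 < 1) :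
    Integrable (fun x ↦ exp (l * ‖x‖ ^ 2)) (gaussianPi n 0 σ) := by
  refine Integrable.of_integral_ne_zero ?_
  rw [← mgf, mgf_norm_sq_gaussianPi n h]
  have : 0 < 1 - 2 * l * σ ^ 2 := by linarith
  positivity

lemma exp_mul_mgf_norm_sq_gaussianPi (n : ℕ) {σ l r : ℝ} (hr : 0 < r)
    (hl : 1 - 2 * l * σ ^ 2 = (r ^ 2)⁻¹) :
    exp (-l * (r * σ * √n) ^ 2) * mgf (fun x ↦ ‖x‖ ^ 2) (gaussianPi n 0 σ) l =
      r ^ n * exp (-(n * (r ^ 2 - 1) / 2)) := by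
  rw [mgf_norm_sq_gaussianPi n (by rw [← sub_pos, hl]; positivity), hl, sqrt_inv,
    sqrt_sq hr.le, inv_inv, mul_comm, mul_pow, mul_pow, sq_sqrt n.cast_nonneg]
  congr 2
  have hr2 : r ^ 2 * (r ^ 2)⁻¹ = 1 := mul_inv_cancel₀ (by positivity)
  linear_combination (n * r ^ 2 / 2) * hl + (n / 2) * hr2

lemma gaussianPi_norm_ge_le_exp (n : ℕ) {σ u : ℝ} (hσ : 0 < σ) (hu : 0 ≤ u) :
    gaussianPi n 0 σ {x | (1 + u) * σ * √n ≤ ‖x‖} ≤ ENNReal.ofReal (exp (-(n * u ^ 2 / 2))) := by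
  set r := 1 + u
  obtain ⟨l, hl⟩ : ∃ l, 1 - 2 * l * σ ^ 2 = (r ^ 2)⁻¹ :=
    ⟨(1 - (r ^ 2)⁻¹) / (2 * σ ^ 2), by field_simp; ring⟩
  have hl₀ : 0 ≤ l := by
    have : (r ^ 2)⁻¹ ≤ 1 := inv_le_one_of_one_le₀ (one_le_pow₀ (by linarith))
    nlinarith [pow_pos hσ 2]
  have hl₁ : 2 * l * σ ^ 2 < 1 := by
    have : 0 < (r ^ 2)⁻¹ := by positivity
    linarith
  calc gaussianPi n 0 σ {x | r * σ * √n ≤ ‖x‖}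
      ≤ gaussianPi n 0 σ {x | (r * σ * √n) ^ 2 ≤ ‖x‖ ^ 2} :=
        measure_mono fun x hx ↦ pow_le_pow_left₀ (by positivity) hx 2
    _ = ENNReal.ofReal ((gaussianPi n 0 σ).real {x | (r * σ * √n) ^ 2 ≤ ‖x‖ ^ 2}) :=
        (ofReal_measureReal (measure_ne_top _ _)).symm
    _ ≤ ENNReal.ofReal (r ^ n * exp (-(n * (r ^ 2 - 1) / 2))) := by
        rw [← exp_mul_mgf_norm_sq_gaussianPi n (by positivity) hl]
        gcongr
        exact measure_ge_le_exp_mul_mgf _ hl₀ (integrable_exp_mul_norm_sq_gaussianPi n hl₁)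
    _ ≤ ENNReal.ofReal (exp (-(n * u ^ 2 / 2))) :=
        ENNReal.ofReal_le_ofReal (one_add_pow_mul_exp_le n (by linarith))

lemma gaussianPi_norm_le_le_exp {n : ℕ} (hn : n ≠ 0) {σ u : ℝ} (hσ : 0 < σ) (hu : u ≤ 0) :
    gaussianPi n 0 σ {x | ‖x‖ ≤ (1 + u) * σ * √n} ≤ ENNReal.ofReal (exp (-(n * u ^ 2 / 2))) := by
  rcases le_or_gt u (-1) with hu₁ | hu₁
  · have hsub : {x : EuclideanSpace ℝ (Fin n) | ‖x‖ ≤ (1 + u) * σ * √n} ⊆ {0} := by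
      intro x hx
      have : (1 + u) * σ * √n ≤ 0 :=
        mul_nonpos_of_nonpos_of_nonneg (mul_nonpos_of_nonpos_of_nonneg (by linarith) hσ.le)
          (sqrt_nonneg _)
      exact norm_le_zero_iff.mp (le_trans hx this)
    rw [measure_mono_null hsub (gaussianPi_singleton hn 0 hσ.ne' 0)]
    exact zero_le
  set r := 1 + u
  have hr : 0 < r := by linarith
  obtain ⟨l, hl⟩ : ∃ l, 1 - 2 * l * σ ^ 2 = (r ^ 2)⁻¹ :=
    ⟨(1 - (r ^ 2)⁻¹) / (2 * σ ^ 2), by field_simp; ring⟩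
  have hl₀ : l ≤ 0 := by
    have : 1 ≤ (r ^ 2)⁻¹ := (one_le_inv₀ (by positivity)).mpr (pow_le_one₀ hr.le (by linarith))
    nlinarith [pow_pos hσ 2]
  have hl₁ : 2 * l * σ ^ 2 < 1 := by nlinarith [pow_pos hσ 2]
  calc gaussianPi n 0 σ {x | ‖x‖ ≤ r * σ * √n}
      ≤ gaussianPi n 0 σ {x | ‖x‖ ^ 2 ≤ (r * σ * √n) ^ 2} :=
        measure_mono fun x hx ↦ pow_le_pow_left₀ (by positivity) hx 2
    _ = ENNReal.ofReal ((gaussianPi n 0 σ).real {x | ‖x‖ ^ 2 ≤ (r * σ * √n) ^ 2}) :=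
        (ofReal_measureReal (measure_ne_top _ _)).symm
    _ ≤ ENNReal.ofReal (r ^ n * exp (-(n * (r ^ 2 - 1) / 2))) := by
        rw [← exp_mul_mgf_norm_sq_gaussianPi n hr hl]
        gcongr
        exact measure_le_le_exp_mul_mgf _ hl₀ (integrable_exp_mul_norm_sq_gaussianPi n hl₁)
    _ ≤ ENNReal.ofReal (exp (-(n * u ^ 2 / 2))) :=
        ENNReal.ofReal_le_ofReal (one_add_pow_mul_exp_le n hu₁.le)

lemma gaussianPi_abs_norm_sub_ge_le (n : ℕ) {σ t : ℝ} (hσ : 0 < σ) (ht : 0 ≤ t) :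
    gaussianPi n 0 σ {x | t ≤ |‖x‖ - σ * √n|} ≤
      ENNReal.ofReal (2 * exp (-(t ^ 2 / (2 * σ ^ 2)))) := by
  rcases ht.eq_or_lt with rfl | ht
  · refine prob_le_one.trans ?_
    simp
  rcases Nat.eq_zero_or_pos n with rfl | hn
  · have : {x : EuclideanSpace ℝ (Fin 0) | t ≤ |‖x‖ - σ * √(0 : ℕ)|} = ∅ :=
      Set.eq_empty_of_forall_notMem fun x (hx : t ≤ _) ↦ by
        simp [Subsingleton.elim x 0] at hx
        linarith
    rw [this, measure_empty]
    exact zero_le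
  have hσn : 0 < σ * √n := by positivity
  set u := t / (σ * √n)
  have hu : 0 ≤ u := by positivity
  have hut : u * (σ * √n) = t := div_mul_cancel₀ t hσn.ne'
  have hexp : -(n * u ^ 2 / 2) = -(t ^ 2 / (2 * σ ^ 2)) := by
    rw [← hut, mul_pow, mul_pow, sq_sqrt n.cast_nonneg]
    field_simp
  have hsub : {x : EuclideanSpace ℝ (Fin n) | t ≤ |‖x‖ - σ * √n|} ⊆
      {x | (1 + u) * σ * √n ≤ ‖x‖} ∪ {x | ‖x‖ ≤ (1 + -u) * σ * √n} := by
    intro x (hx : t ≤ _)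
    rcases le_abs'.mp hx with h | h
    · exact Or.inr (show ‖x‖ ≤ (1 + -u) * σ * √n by linarith)
    · exact Or.inl (show (1 + u) * σ * √n ≤ ‖x‖ by linarith)
  calc gaussianPi n 0 σ {x | t ≤ |‖x‖ - σ * √n|}
      ≤ gaussianPi n 0 σ {x | (1 + u) * σ * √n ≤ ‖x‖} +
          gaussianPi n 0 σ {x | ‖x‖ ≤ (1 + -u) * σ * √n} :=
        (measure_mono hsub).trans (measure_union_le _ _)
    _ ≤ ENNReal.ofReal (exp (-(n * u ^ 2 / 2))) + ENNReal.ofReal (exp (-(n * (-u) ^ 2 / 2))) :=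
        add_le_add (gaussianPi_norm_ge_le_exp n hσ hu)
          (gaussianPi_norm_le_le_exp hn.ne' hσ (by linarith))
    _ = ENNReal.ofReal (2 * exp (-(t ^ 2 / (2 * σ ^ 2)))) := by
        rw [neg_sq, hexp, ← ENNReal.ofReal_add (by positivity) (by positivity), ← two_mul]

lemma gaussianPi_abs_norm_div_sub_one_ge_le {n : ℕ} (hn : n ≠ 0) {σ δ : ℝ} (hσ : 0 < σ)
    (hδ : 0 ≤ δ) :
    gaussianPi n 0 σ {x | δ ≤ |‖x‖ / (σ * √n) - 1|} ≤
      ENNReal.ofReal (2 * exp (-(δ ^ 2 / 2 * n))) := by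
  have hσn : 0 < σ * √n := by positivity
  have hset : {x : EuclideanSpace ℝ (Fin n) | δ ≤ |‖x‖ / (σ * √n) - 1|} =
      {x | δ * (σ * √n) ≤ |‖x‖ - σ * √n|} := by
    ext x
    rw [Set.mem_ofPred_eq, Set.mem_ofPred_eq, ← le_div_iff₀ hσn, ← abs_of_pos hσn, ← abs_div,
      abs_of_pos hσn, sub_div, div_self hσn.ne']
  rw [hset]
  refine (gaussianPi_abs_norm_sub_ge_le n hσ (by positivity)).trans_eq ?_
  congr 3
  rw [mul_pow, mul_pow, sq_sqrt n.cast_nonneg]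
  field_simp

theorem gaussian_norm_concentration :
    (∃ c : ℝ, 0 < c ∧ ∀ (n : ℕ) (σ : ℝ), 0 < σ → ∀ t : ℝ, 0 ≤ t →
        gaussianPi n 0 σ {x | t ≤ |‖x‖ - σ * Real.sqrt n|} ≤
          ENNReal.ofReal (2 * Real.exp (-c * t ^ 2 / σ ^ 2))) ∧
      ∀ σ : ℝ, 0 < σ → ∀ δ : ℝ, 0 < δ →
        Filter.Tendsto
          (fun n : ℕ => gaussianPi n 0 σ {x | δ ≤ |‖x‖ / (σ * Real.sqrt n) - 1|})
          Filter.atTop (nhds 0) := by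
  refine ⟨⟨1 / 2, one_half_pos, fun n σ hσ t ht ↦ ?_⟩, fun σ hσ δ hδ ↦ ?_⟩
  · refine (gaussianPi_abs_norm_sub_ge_le n hσ ht).trans_eq ?_
    congr 3
    ring
  · have hbound : ∀ᶠ n : ℕ in Filter.atTop,
        gaussianPi n 0 σ {x | δ ≤ |‖x‖ / (σ * √n) - 1|} ≤
          ENNReal.ofReal (2 * exp (-(δ ^ 2 / 2 * n))) :=
      Filter.eventually_ne_atTop 0 |>.mono fun n hn ↦
        gaussianPi_abs_norm_div_sub_one_ge_le hn hσ hδ.le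
    have hlim : Filter.Tendsto (fun n : ℕ ↦ ENNReal.ofReal (2 * exp (-(δ ^ 2 / 2 * n))))
        Filter.atTop (nhds 0) := by
      have := (tendsto_exp_neg_atTop_nhds_zero.comp
        (tendsto_natCast_atTop_atTop.const_mul_atTop (by positivity : 0 < δ ^ 2 / 2))).const_mul 2
      simpa using ENNReal.tendsto_ofReal this
    exact tendsto_of_tendsto_of_tendsto_of_le_of_le' tendsto_const_nhds hlim
      (Filter.Eventually.of_forall fun _ ↦ zero_le) hbound
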